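/- Let N ≥ 1, K ≥ 0, let D_0,…,D_K be N×N real symmetric matrices and E_0,…,E_{K−1} be N×N real matrices, and let T be the (K+1)N×(K+1)N symmetric block tridiagonal matrix with diagonal blocks T_{k,k} = D_k, subdiagonal blocks T_{k+1,k} = E_k, superdiagonal blocks T_{k,k+1} = E_kᵀ, and all other blocks zero. If T is positive definite, then the matrices defined recursively by Q_0 = D_0 and Q_{k+1} = D_{k+1} − E_kQ_k^{−1}E_kᵀ are all symmetric positive definite (in particular invertible, so the recursion is well-defined) for k = 0,…,K. -/

import Mathlib

/-!
For a block vector `x` supported on the blocks `0, …, k`, the quadratic form `xᵀ T x` is a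
tridiagonal sum. Choosing `x_j = -Q_j⁻¹ E_jᵀ x_{j+1}` for `j < k` (back substitution) completes the
square block by block, and the form telescopes to `x_kᵀ Q_k x_k`. Since `x_k` is arbitrary and
`x ≠ 0` whenever `x_k ≠ 0`, positivity of `T` gives positivity of `Q_k`; the invertibility of the
earlier `Q_j` needed for the substitution comes from strong induction on `k`.
-/

open Matrix

/-- The Schur-complement recursion `Q₀ = D₀`, `Q_{k+1} = D_{k+1} − E_k Q_k⁻¹ E_kᵀ`. -/
noncomputable def Qrec {N : ℕ} (D E : ℕ → Matrix (Fin N) (Fin N) ℝ) :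
    ℕ → Matrix (Fin N) (Fin N) ℝ
  | 0 => D 0
  | k + 1 => D (k + 1) - E k * (Qrec D E k)⁻¹ * (E k)ᵀ

/-- The `(K+1)N × (K+1)N` block tridiagonal matrix with diagonal blocks `D_k`,
subdiagonal blocks `E_k` and superdiagonal blocks `E_kᵀ`. -/
noncomputable def blockTridiag (K N : ℕ) (D E : ℕ → Matrix (Fin N) (Fin N) ℝ) :
    Matrix (Fin (K + 1) × Fin N) (Fin (K + 1) × Fin N) ℝ :=
  fun p q =>
    if (p.1 : ℕ) = (q.1 : ℕ) then D (p.1 : ℕ) p.2 q.2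
    else if (p.1 : ℕ) = (q.1 : ℕ) + 1 then E (q.1 : ℕ) p.2 q.2
    else if (q.1 : ℕ) = (p.1 : ℕ) + 1 then (E (p.1 : ℕ))ᵀ p.2 q.2
    else 0

open Finset

theorem dotProduct_mulVec_add_two_mul_of_eq_neg_inv {m n R : Type*} [Fintype m] [Fintype n]
    [DecidableEq n] [CommRing R] {Q : Matrix n n R} (hQ : IsUnit Q.det) (E : Matrix m n R)
    (u : m → R) {x : n → R} (hx : x = -(Q⁻¹ * Eᵀ) *ᵥ u) :
    x ⬝ᵥ Q *ᵥ x + 2 * (u ⬝ᵥ E *ᵥ x) = -(u ⬝ᵥ (E * Q⁻¹ * Eᵀ) *ᵥ u) := by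
  rw [hx, neg_mulVec]
  set w := (Q⁻¹ * Eᵀ) *ᵥ u
  have hQw : Q *ᵥ w = Eᵀ *ᵥ u := by
    rw [mulVec_mulVec, ← Matrix.mul_assoc, mul_nonsing_inv Q hQ, Matrix.one_mul]
  have hEw : u ⬝ᵥ E *ᵥ w = u ⬝ᵥ (E * Q⁻¹ * Eᵀ) *ᵥ u := by
    rw [mulVec_mulVec, Matrix.mul_assoc]
  have hwQw : w ⬝ᵥ Q *ᵥ w = u ⬝ᵥ E *ᵥ w := by
    rw [hQw, dotProduct_transpose_mulVec]
  simp only [mulVec_neg, dotProduct_neg, neg_dotProduct, neg_neg, hwQw, hEw]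
  ring

def blockVec {n R : Type*} (K : ℕ) (x : ℕ → n → R) : Fin (K + 1) × n → R :=
  fun p => x p.1 p.2

theorem blockVec_ne_zero {n R : Type*} [Zero R] {K k : ℕ} {x : ℕ → n → R} (hk : k ≤ K)
    (hx : x k ≠ 0) : blockVec K x ≠ 0 := by
  intro h
  exact hx (funext fun i => congrFun h (⟨k, by omega⟩, i))

section TridiagonalForm

variable {n R : Type*} [Fintype n] [CommSemiring R]

theorem blockVec_dotProduct_mulVec {K : ℕ} {M : Matrix (Fin (K + 1) × n) (Fin (K + 1) × n) R}
    {B : ℕ → ℕ → Matrix n n R} (hM : ∀ a b i j, M (a, i) (b, j) = B a b i j) (x : ℕ → n → R) :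
    blockVec K x ⬝ᵥ M *ᵥ blockVec K x =
      ∑ a ∈ range (K + 1), ∑ b ∈ range (K + 1), x a ⬝ᵥ B a b *ᵥ x b := by
  rw [← Fin.sum_univ_eq_sum_range]
  simp only [← Fin.sum_univ_eq_sum_range (fun b => x _ ⬝ᵥ B _ b *ᵥ x b)]
  simp only [dotProduct, mulVec, Fintype.sum_prod_type, blockVec, hM, mul_sum]
  exact sum_congr rfl fun a _ => sum_comm

def tridiagBlock (D E : ℕ → Matrix n n R) (a b : ℕ) : Matrix n n R :=
  if a = b then D a else if a = b + 1 then E b else if b = a + 1 then (E a)ᵀ else 0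

def tridiagQuadForm (D E : ℕ → Matrix n n R) (x : ℕ → n → R) (m : ℕ) : R :=
  ∑ a ∈ range (m + 1), x a ⬝ᵥ D a *ᵥ x a + 2 * ∑ a ∈ range m, x (a + 1) ⬝ᵥ E a *ᵥ x a

theorem tridiagQuadForm_zero (D E : ℕ → Matrix n n R) (x : ℕ → n → R) :
    tridiagQuadForm D E x 0 = x 0 ⬝ᵥ D 0 *ᵥ x 0 := by
  simp [tridiagQuadForm]

theorem tridiagQuadForm_succ (D E : ℕ → Matrix n n R) (x : ℕ → n → R) (m : ℕ) :
    tridiagQuadForm D E x (m + 1) = tridiagQuadForm D E x m +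
      (x (m + 1) ⬝ᵥ D (m + 1) *ᵥ x (m + 1) + 2 * (x (m + 1) ⬝ᵥ E m *ᵥ x m)) := by
  simp only [tridiagQuadForm, sum_range_succ _ (m + 1), sum_range_succ _ m]
  ring

theorem tridiagQuadForm_eq_of_forall_lt_eq_zero (D E : ℕ → Matrix n n R) {x : ℕ → n → R}
    {k m : ℕ} (hkm : k ≤ m) (hx : ∀ j, k < j → x j = 0) :
    tridiagQuadForm D E x m = tridiagQuadForm D E x k := by
  induction m, hkm using Nat.le_induction with
  | base => rfl
  | succ m hkm ih => simp [tridiagQuadForm_succ, ih, hx (m + 1) (by omega)]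

theorem sum_dotProduct_tridiagBlock (D E : ℕ → Matrix n n R) (x : ℕ → n → R) (m : ℕ) :
    ∑ a ∈ range (m + 1), ∑ b ∈ range (m + 1), x a ⬝ᵥ tridiagBlock D E a b *ᵥ x b =
      tridiagQuadForm D E x m := by
  have hterm : ∀ a b, x a ⬝ᵥ tridiagBlock D E a b *ᵥ x b =
      (if a = b then x a ⬝ᵥ D a *ᵥ x a else 0) + (if a = b + 1 then x a ⬝ᵥ E b *ᵥ x b else 0) +
        (if b = a + 1 then x b ⬝ᵥ E a *ᵥ x a else 0) := by
    intro a b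
    unfold tridiagBlock
    split_ifs <;> first | omega | simp_all [dotProduct_transpose_mulVec]
  have hshift : ∀ h : ℕ → R,
      ∑ b ∈ range (m + 1), (if b + 1 ∈ range (m + 1) then h b else 0) = ∑ b ∈ range m, h b := by
    intro h
    rw [sum_range_succ, if_neg (by simp), add_zero]
    exact sum_congr rfl fun b hb => if_pos (by simpa using hb)
  simp only [hterm, sum_add_distrib, sum_ite_eq, sum_ite_eq', sum_ite_mem, inter_self]
  rw [sum_comm (f := fun a b => if a = b + 1 then _ else 0)]
  simp only [sum_ite_eq', hshift, tridiagQuadForm]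
  ring

end TridiagonalForm

theorem blockTridiag_apply {N : ℕ} (K : ℕ) (D E : ℕ → Matrix (Fin N) (Fin N) ℝ)
    (a b : Fin (K + 1)) (i j : Fin N) :
    blockTridiag K N D E (a, i) (b, j) = tridiagBlock D E a b i j := by
  simp only [blockTridiag, tridiagBlock]
  split_ifs <;> rfl

section BackSubstitution

variable {n R : Type*} [Fintype n] [Semiring R]

def backSubst (M : ℕ → Matrix n n R) (k : ℕ) (y : n → R) (j : ℕ) : n → R :=
  if j < k then M j *ᵥ backSubst M k y (j + 1) else if j = k then y else 0
termination_by k - j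

variable (M : ℕ → Matrix n n R) (k : ℕ) (y : n → R)

theorem backSubst_of_lt {j : ℕ} (hj : j < k) :
    backSubst M k y j = M j *ᵥ backSubst M k y (j + 1) := by
  rw [backSubst, if_pos hj]

theorem backSubst_self : backSubst M k y k = y := by
  rw [backSubst, if_neg (lt_irrefl k), if_pos rfl]

theorem backSubst_of_gt {j : ℕ} (hj : k < j) : backSubst M k y j = 0 := by
  rw [backSubst, if_neg (by omega), if_neg (by omega)]

end BackSubstitution

section Schur

variable {N : ℕ} (D E : ℕ → Matrix (Fin N) (Fin N) ℝ)

theorem Qrec_isSymm {k : ℕ} (hD : ∀ j ≤ k, (D j).IsSymm) : (Qrec D E k).IsSymm := by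
  induction k with
  | zero => exact hD 0 le_rfl
  | succ k ih =>
    have hQ : (Qrec D E k)ᵀ = Qrec D E k := ih fun j hj => hD j (by omega)
    rw [IsSymm, Qrec, transpose_sub, hD (k + 1) le_rfl, transpose_mul, transpose_mul,
      transpose_transpose, transpose_nonsing_inv, hQ, ← Matrix.mul_assoc]

theorem tridiagQuadForm_eq_Qrec_of_backSubst {x : ℕ → Fin N → ℝ} {m : ℕ}
    (hQ : ∀ j < m, IsUnit (Qrec D E j).det)
    (hx : ∀ j < m, x j = -((Qrec D E j)⁻¹ * (E j)ᵀ) *ᵥ x (j + 1)) :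
    tridiagQuadForm D E x m = x m ⬝ᵥ Qrec D E m *ᵥ x m := by
  induction m with
  | zero => exact tridiagQuadForm_zero D E x
  | succ m ih =>
    have hsquare := dotProduct_mulVec_add_two_mul_of_eq_neg_inv (hQ m m.lt_succ_self) (E m)
      (x (m + 1)) (hx m m.lt_succ_self)
    rw [tridiagQuadForm_succ, ih (fun j hj => hQ j (by omega)) (fun j hj => hx j (by omega)),
      ← add_assoc, add_comm (x m ⬝ᵥ _), add_assoc, hsquare, Qrec, sub_mulVec, dotProduct_sub]
    ring

end Schur

theorem block_tridiagonal_posdef_schur_general (N K : ℕ)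
    (D E : ℕ → Matrix (Fin N) (Fin N) ℝ) (hDsym : ∀ k ≤ K, (D k)ᵀ = D k)
    (hT : (blockTridiag K N D E).PosDef) :
    ∀ k ≤ K, (Qrec D E k).PosDef := by
  intro k
  induction k using Nat.strong_induction_on with
  | _ k ih =>
  intro hk
  have hQ : ∀ j < k, IsUnit (Qrec D E j).det := fun j hj =>
    (ih j hj (by omega)).det_pos.ne'.isUnit
  refine posDef_iff_dotProduct_mulVec.mpr ⟨?_, fun y hy => ?_⟩
  · exact isHermitian_iff_isSymm.mpr (Qrec_isSymm D E fun j hj => hDsym j (hj.trans hk))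
  · let x := backSubst (fun j => -((Qrec D E j)⁻¹ * (E j)ᵀ)) k y
    have hpos := hT.dotProduct_mulVec_pos
      (blockVec_ne_zero (x := x) hk (by simpa [x, backSubst_self]))
    rwa [star_trivial, blockVec_dotProduct_mulVec (blockTridiag_apply K D E),
      sum_dotProduct_tridiagBlock,
      tridiagQuadForm_eq_of_forall_lt_eq_zero D E hk (fun j => backSubst_of_gt _ k y),
      tridiagQuadForm_eq_Qrec_of_backSubst D E hQ (fun j => backSubst_of_lt _ k y),
      backSubst_self] at hpos

/-- if the symmetric block tridiagonal matrix with diagonal blocks `D_k`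
and off-diagonal blocks `E_k`, `E_kᵀ` is positive definite, then all the Schur
complements `Q_k` produced by the recursion `Q₀ = D₀`, `Q_{k+1} = D_{k+1} − E_k Q_k⁻¹ E_kᵀ`
are symmetric positive definite (in particular invertible). -/
theorem block_tridiagonal_posdef_schur (N K : ℕ) (hN : 1 ≤ N)
    (D E : ℕ → Matrix (Fin N) (Fin N) ℝ) (hDsym : ∀ k ≤ K, (D k)ᵀ = D k)
    (hT : (blockTridiag K N D E).PosDef) :
    ∀ k ≤ K, (Qrec D E k).PosDef :=
  block_tridiagonal_posdef_schur_general N K D E hDsym hT
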